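/- Let p : ℝ → [1,∞) be a measurable variable exponent with p(x) = 2 for x ∈ (−∞,−2) and p(x) ≥ 4 for x ∈ [2,∞), and let u(x) = |x|^{−1/3} χ_{[2,∞)}(x). Then ∫_ℝ |u(x)|^{p(x)} dx < ∞, yet ∫_ℝ |M u(x)|^{p(x)} dx = ∞, where M u(x) = sup_{r>0} (1/(2r)) ∫_{x−r}^{x+r} |u(s)| ds is the Hardy–Littlewood maximal function; hence the maximal operator is not bounded on variable exponent Lebesgue spaces in general. -/

import Mathlib

/-!
On `[2, ∞)` we have `0 < u ≤ 1` and `p ≥ 4`, so `|u|^p ≤ x^{-4/3}`, which is integrable. At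
`x = -y ≤ -4`, averaging `|u|` over `[-3y, y]` (radius `2y`) and keeping only `[y/2, y]` gives
`M u(x) ≥ y^{-1/3}/8`; as `p = 2` there, `(M u)^p ≥ |x|^{-2/3}/64`, which is not integrable
at `-∞`.
-/

open MeasureTheory Set Filter
open scoped ENNReal Topology

noncomputable section

/-- The centered Hardy–Littlewood maximal function on `ℝ`:
`M u(x) = sup_{r>0} (1/(2r)) ∫_{x-r}^{x+r} |u(s)| ds`. -/
def HLmax (u : ℝ → ℝ) (x : ℝ) : ℝ≥0∞ :=
  ⨆ (r : ℝ) (_ : 0 < r),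
    ENNReal.ofReal ((1 / (2 * r)) * ∫ s in (x - r)..(x + r), |u s|)

theorem ofReal_average_le_HLmax (u : ℝ → ℝ) (x : ℝ) {r : ℝ} (hr : 0 < r) :
    ENNReal.ofReal ((1 / (2 * r)) * ∫ s in (x - r)..(x + r), |u s|) ≤ HLmax u x :=
  le_iSup₂ (f := fun r (_ : 0 < r) =>
    ENNReal.ofReal ((1 / (2 * r)) * ∫ s in (x - r)..(x + r), |u s|)) r hr

theorem lintegral_Iio_neg_rpow_eq_top {a s : ℝ} (ha : 0 < a) (hs : -1 ≤ s) :
    ∫⁻ x in Iio (-a), ENNReal.ofReal ((-x) ^ s) = ∞ := by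
  have hreflect : ∫⁻ x in Iio (-a), ENNReal.ofReal ((-x) ^ s)
      = ∫⁻ x in Ioi a, ENNReal.ofReal (x ^ s) := by
    rw [← (Measure.measurePreserving_neg volume).setLIntegral_comp_preimage_emb
      (Homeomorph.neg ℝ).measurableEmbedding (fun x => ENNReal.ofReal (x ^ s)) (Ioi a),
      show Neg.neg ⁻¹' Ioi a = Iio (-a) from neg_Ioi a]
  rw [hreflect, ← not_ne_iff, lintegral_ofReal_ne_top_iff_integrable (by fun_prop)]
  · rw [← IntegrableOn, integrableOn_Ioi_rpow_iff ha]
    exact hs.not_gt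
  · filter_upwards [ae_restrict_mem measurableSet_Ioi] with x hx
    exact Real.rpow_nonneg (ha.trans hx).le s

def cubeRootTail (x : ℝ) : ℝ := if 2 ≤ x then |x| ^ (-(1 / 3) : ℝ) else 0

theorem cubeRootTail_of_two_le {x : ℝ} (hx : 2 ≤ x) : cubeRootTail x = x ^ (-(1 / 3) : ℝ) := by
  rw [cubeRootTail, if_pos hx, abs_of_nonneg (by linarith)]

theorem cubeRootTail_of_lt_two {x : ℝ} (hx : x < 2) : cubeRootTail x = 0 :=
  if_neg hx.not_ge

theorem cubeRootTail_nonneg (x : ℝ) : 0 ≤ cubeRootTail x := by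
  unfold cubeRootTail; split_ifs <;> positivity

theorem cubeRootTail_le_one (x : ℝ) : cubeRootTail x ≤ 1 := by
  rcases lt_or_ge x 2 with hx | hx
  · rw [cubeRootTail_of_lt_two hx]; exact zero_le_one
  · rw [cubeRootTail_of_two_le hx]
    exact Real.rpow_le_one_of_one_le_of_nonpos (by linarith) (by norm_num)

theorem measurable_cubeRootTail : Measurable cubeRootTail :=
  Measurable.ite measurableSet_Ici (by fun_prop) measurable_const

theorem intervalIntegrable_cubeRootTail (a b : ℝ) :
    IntervalIntegrable cubeRootTail volume a b := by
  constructor <;>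
  · refine Measure.integrableOn_of_bounded (M := 1) measure_Ioc_lt_top.ne
      measurable_cubeRootTail.aestronglyMeasurable (Eventually.of_forall fun s => ?_)
    rw [Real.norm_of_nonneg (cubeRootTail_nonneg s)]
    exact cubeRootTail_le_one s

theorem ofReal_abs_cubeRootTail_rpow_le {q : ℝ} (x : ℝ) (hq0 : q ≠ 0) (hq4 : 2 ≤ x → 4 ≤ q) :
    ENNReal.ofReal (|cubeRootTail x| ^ q)
      ≤ (Ioi (1 : ℝ)).indicator (fun x => ENNReal.ofReal (x ^ (-(4 / 3) : ℝ))) x := by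
  rw [abs_of_nonneg (cubeRootTail_nonneg x)]
  rcases lt_or_ge x 2 with hx | hx
  · rw [cubeRootTail_of_lt_two hx, Real.zero_rpow hq0, ENNReal.ofReal_zero]
    exact zero_le
  · rw [indicator_of_mem (show x ∈ Ioi (1 : ℝ) from by simp only [mem_Ioi]; linarith)]
    refine ENNReal.ofReal_le_ofReal ?_
    have hx0 : 0 < x := by linarith
    calc cubeRootTail x ^ q ≤ cubeRootTail x ^ (4 : ℝ) :=
          Real.rpow_le_rpow_of_exponent_ge (by rw [cubeRootTail_of_two_le hx]; positivity)
            (cubeRootTail_le_one x) (hq4 hx)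
      _ = x ^ (-(4 / 3) : ℝ) := by
          rw [cubeRootTail_of_two_le hx, ← Real.rpow_mul hx0.le]; norm_num

theorem ofReal_rpow_div_eight_le_HLmax_cubeRootTail {y : ℝ} (hy : 4 ≤ y) :
    ENNReal.ofReal (y ^ (-(1 / 3) : ℝ) / 8) ≤ HLmax cubeRootTail (-y) := by
  have hy0 : 0 < y := by linarith
  have hwindow :
      y / 2 * y ^ (-(1 / 3) : ℝ) ≤ ∫ s in (-y - 2 * y)..(-y + 2 * y), |cubeRootTail s| := by
    calc y / 2 * y ^ (-(1 / 3) : ℝ) = ∫ _ in (y / 2)..y, y ^ (-(1 / 3) : ℝ) := by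
          rw [intervalIntegral.integral_const, smul_eq_mul]; ring
      _ ≤ ∫ s in (y / 2)..y, |cubeRootTail s| := by
          refine intervalIntegral.integral_mono_on (by linarith) intervalIntegrable_const
            (intervalIntegrable_cubeRootTail _ _).abs fun s hs => ?_
          rw [abs_of_nonneg (cubeRootTail_nonneg s), cubeRootTail_of_two_le (by linarith [hs.1])]
          exact Real.rpow_le_rpow_of_nonpos (by linarith [hs.1]) hs.2 (by norm_num)
      _ ≤ ∫ s in (-y - 2 * y)..(-y + 2 * y), |cubeRootTail s| :=
          intervalIntegral.integral_mono_interval (by linarith) (by linarith) (by linarith)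
            (Eventually.of_forall fun s => abs_nonneg _) (intervalIntegrable_cubeRootTail _ _).abs
  refine le_trans (ENNReal.ofReal_le_ofReal ?_)
    (ofReal_average_le_HLmax _ _ (by positivity : 0 < 2 * y))
  calc y ^ (-(1 / 3) : ℝ) / 8 = 1 / (2 * (2 * y)) * (y / 2 * y ^ (-(1 / 3) : ℝ)) := by
        field_simp; ring
    _ ≤ _ := mul_le_mul_of_nonneg_left hwindow (by positivity)

theorem HLmax_cubeRootTail_sq_ge {x : ℝ} (hx : x < -4) :
    ENNReal.ofReal 64⁻¹ * ENNReal.ofReal ((-x) ^ (-(2 / 3) : ℝ))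
      ≤ HLmax cubeRootTail x ^ (2 : ℝ) := by
  have hy0 : 0 < -x := by linarith
  calc ENNReal.ofReal 64⁻¹ * ENNReal.ofReal ((-x) ^ (-(2 / 3) : ℝ))
      = ENNReal.ofReal ((-x) ^ (-(1 / 3) : ℝ) / 8) ^ (2 : ℝ) := by
        rw [← ENNReal.ofReal_mul (by norm_num), ENNReal.ofReal_rpow_of_nonneg (by positivity)
          (by norm_num), Real.div_rpow (by positivity) (by norm_num), ← Real.rpow_mul hy0.le]
        congr 1
        norm_num
        ring
    _ ≤ HLmax cubeRootTail x ^ (2 : ℝ) := by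
        gcongr
        simpa using ofReal_rpow_div_eight_le_HLmax_cubeRootTail (y := -x) (by linarith)

theorem stmt15_general
    (p : ℝ → ℝ) (hp1 : ∀ x, 1 ≤ p x)
    (hp2 : ∀ x < (-2 : ℝ), p x = 2) (hp4 : ∀ x ≥ (2 : ℝ), 4 ≤ p x)
    (u : ℝ → ℝ)
    (hu : u = fun x => if 2 ≤ x then |x| ^ (-(1 / 3) : ℝ) else 0) :
    (∫⁻ x : ℝ, ENNReal.ofReal (|u x| ^ p x)) < ⊤ ∧
    (∫⁻ x : ℝ, HLmax u x ^ p x) = ⊤ := by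
  change u = cubeRootTail at hu
  subst hu
  constructor
  · calc ∫⁻ x, ENNReal.ofReal (|cubeRootTail x| ^ p x)
        ≤ ∫⁻ x, (Ioi (1 : ℝ)).indicator (fun x => ENNReal.ofReal (x ^ (-(4 / 3) : ℝ))) x :=
          lintegral_mono fun x => ofReal_abs_cubeRootTail_rpow_le x
            (zero_lt_one.trans_le (hp1 x)).ne' (hp4 x)
      _ = ∫⁻ x in Ioi (1 : ℝ), ENNReal.ofReal (x ^ (-(4 / 3) : ℝ)) :=
          lintegral_indicator measurableSet_Ioi _
      _ < ⊤ := (integrableOn_Ioi_rpow_of_lt (by norm_num) one_pos).lintegral_lt_top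
  · refine top_le_iff.1 ?_
    calc ⊤ = ENNReal.ofReal 64⁻¹
          * ∫⁻ x in Iio (-4 : ℝ), ENNReal.ofReal ((-x) ^ (-(2 / 3) : ℝ)) := by
          rw [lintegral_Iio_neg_rpow_eq_top (by norm_num) (by norm_num), ENNReal.mul_top (by simp)]
      _ = ∫⁻ x in Iio (-4 : ℝ), ENNReal.ofReal 64⁻¹ * ENNReal.ofReal ((-x) ^ (-(2 / 3) : ℝ)) :=
          (lintegral_const_mul' _ _ ENNReal.ofReal_ne_top).symm
      _ ≤ ∫⁻ x in Iio (-4 : ℝ), HLmax cubeRootTail x ^ p x :=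
          setLIntegral_mono' measurableSet_Iio fun x (hx : x < -4) => by
            rw [hp2 x (by linarith)]
            exact HLmax_cubeRootTail_sq_ge hx
      _ ≤ ∫⁻ x, HLmax cubeRootTail x ^ p x := setLIntegral_le_lintegral _ _

theorem stmt15
    (p : ℝ → ℝ) (hpmeas : Measurable p) (hp1 : ∀ x, 1 ≤ p x)
    (hp2 : ∀ x < (-2 : ℝ), p x = 2) (hp4 : ∀ x ≥ (2 : ℝ), 4 ≤ p x)
    (u : ℝ → ℝ)
    (hu : u = fun x => if 2 ≤ x then |x| ^ (-(1 / 3) : ℝ) else 0) :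
    (∫⁻ x : ℝ, ENNReal.ofReal (|u x| ^ p x)) < ⊤ ∧
    (∫⁻ x : ℝ, HLmax u x ^ p x) = ⊤ :=
  stmt15_general p hp1 hp2 hp4 u hu
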